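/- arXiv:2403.10841 — 2 statements merged into one kernel-verified Lean document; each statement's English description precedes it below -/
import Mathlib

section
/- Proposition 1 (trajectory derivatives via Pontryagin differentiable programming): suppose maps θ ↦ x_k(θ), θ ↦ u_k(θ), θ ↦ p_k(θ) are differentiable at θ̄ ∈ ℝ^N and satisfy, for all θ in a neighborhood of θ̄, the discrete-time Pontryagin conditions: x_0(θ) = x_0 (fixed), x_{k+1}(θ) = f(x_k(θ), u_k(θ)), p_k(θ) = (∂c_k/∂x)(x_k(θ), u_k(θ), θ) + (∂f/∂x)(x_k(θ), u_k(θ))ᵀ p_{k+1}(θ) for k = 1,…,T−1, (∂c_k/∂u)(x_k(θ), u_k(θ), θ) + (∂f/∂u)(x_k(θ), u_k(θ))ᵀ p_{k+1}(θ) = 0 for k = 0,…,T−1, and p_T(θ) = (∂c_T/∂x)(x_T(θ), θ). Let A_k, B_k, H_k^{xx}, H_k^{xu} = (H_k^{ux})ᵀ, H_k^{uu}, H_k^{xe}, H_k^{ue}, H_T^{xx}, H_T^{xe} be the Jacobians of f and the second derivatives of the Hamiltonian H and of c_T evaluated along (x_k(θ̄), u_k(θ̄), p_{k+1}(θ̄),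 θ̄). Assume H_k^{uu} is invertible for all k = 0,…,T−1 and I + 𝒫_{k+1}ℛ_k is invertible for all k = 0,…,T−1, where 𝒫_T = H_T^{xx}, 𝒲_T = H_T^{xe}, 𝒫_k = 𝒬_k + 𝒜_kᵀ(I + 𝒫_{k+1}ℛ_k)^{-1}𝒫_{k+1}𝒜_k, 𝒲_k = 𝒜_kᵀ(I + 𝒫_{k+1}ℛ_k)^{-1}(𝒲_{k+1} + 𝒫_{k+1}ℳ_k) + 𝒩_k, with 𝒜_k = A_k − B_k(H_k^{uu})^{-1}H_k^{ux}, ℛ_k = B_k(H_k^{uu})^{-1}B_kᵀ, ℳ_k = −B_k(H_k^{uu})^{-1}H_k^{ue}, 𝒬_k = H_k^{xx} − H_k^{xu}(H_k^{uu})^{-1}H_k^{ux}, 𝒩_k = H_k^{xe} − H_k^{xu}(H_k^{uu})^{-1}H_k^{ue}. Then the Jacobians ∂x_k/∂θ(θ̄) and ∂u_k/∂θ(θ̄) are exactly the matrices X_k, U_k generated forward by X_0 = 0, U_k = −(H_k^{uu})^{-1}( H_k^{ux} X_k + H_k^{ue} + B_kᵀ (I + 𝒫_{k+1}ℛ_k)^{-1}(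 𝒫_{k+1}𝒜_k X_k + 𝒫_{k+1}ℳ_k + 𝒲_{k+1} ) ), X_{k+1} = A_k X_k + B_k U_k. -/
/-!
On a neighbourhood of `θ̄` the trajectory, control and costate satisfy the Pontryagin
conditions, so their Jacobians `Dx_k, Du_k, Dp_k` at `θ̄` can be obtained by differentiating
those conditions with the chain rule. This gives the *differential PMP*, a linear two-point
boundary value problem whose coefficients are the blocks of the Hessian of the Hamiltonian
(symmetry of second derivatives identifies `H^{xu}` with `(H^{ux})ᵀ` and makes `H^{uu}`
symmetric):
`Dx_{k+1} = A_k Dx_k + B_k Du_k`, `H^{ux}_k Dx_k + H^{uu}_k Du_k + B_kᵀ Dp_{k+1} + H^{ue}_k = 0`,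
`Dp_k = H^{xx}_k Dx_k + H^{xu}_k Du_k + A_kᵀ Dp_{k+1} + H^{xe}_k` and
`Dp_T = H^{xx}_T Dx_T + H^{xe}_T`.
Eliminating `Du_k` through the stationarity equation, a backward induction from the terminal
condition shows `Dp_k = 𝒫_k Dx_k + 𝒲_k`; substituting this Riccati ansatz into the
stationarity equation yields exactly the recursion defining `U_k` and `X_{k+1}`, so the
forward sweep reproduces `Dx_k` and `Du_k`.
-/

open Matrix

namespace PDP

section Jacobian

variable {𝕜 : Type*} [NontriviallyNormedField 𝕜] {E F G H : Type*}
  [NormedAddCommGroup E] [NormedSpace 𝕜 E] [NormedAddCommGroup F] [NormedSpace 𝕜 F]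
  [NormedAddCommGroup G] [NormedSpace 𝕜 G] [NormedAddCommGroup H] [NormedSpace 𝕜 H]
  {a b r N : ℕ}

noncomputable def grad (g : (Fin a → 𝕜) → 𝕜) (z : Fin a → 𝕜) : Fin a → 𝕜 :=
  fun i => fderiv 𝕜 g z (Pi.single i 1)

noncomputable def jacobian (g : (Fin a → 𝕜) → (Fin b → 𝕜)) (z : Fin a → 𝕜) :
    Matrix (Fin b) (Fin a) 𝕜 :=
  of fun i j => fderiv 𝕜 (fun z' => g z' i) z (Pi.single j 1)

theorem fderiv_comp_prodMk_left {g : E × F → G} {y : E} {z : F}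
    (hg : DifferentiableAt 𝕜 g (y, z)) :
    fderiv 𝕜 (fun y' => g (y', z)) y = (fderiv 𝕜 g (y, z)).comp (.inl 𝕜 E F) :=
  (hg.hasFDerivAt.comp y (hasFDerivAt_prodMk_left y z)).fderiv

theorem fderiv_comp_prodMk_right {g : E × F → G} {y : E} {z : F}
    (hg : DifferentiableAt 𝕜 g (y, z)) :
    fderiv 𝕜 (fun z' => g (y, z')) z = (fderiv 𝕜 g (y, z)).comp (.inr 𝕜 E F) :=
  (hg.hasFDerivAt.comp z (hasFDerivAt_prodMk_right y z)).fderiv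

theorem fderiv_comp_prodMk {Φ : E × F → G} {y : H → E} {z : H → F} {θ : H}
    (hΦ : DifferentiableAt 𝕜 Φ (y θ, z θ)) (hy : DifferentiableAt 𝕜 y θ)
    (hz : DifferentiableAt 𝕜 z θ) :
    fderiv 𝕜 (fun t => Φ (y t, z t)) θ =
      (fderiv 𝕜 (fun y' => Φ (y', z θ)) (y θ)).comp (fderiv 𝕜 y θ) +
        fderiv 𝕜 (fun t => Φ (y θ, z t)) θ := by
  rw [fderiv_fun_comp (f := fun t => (y t, z t)) θ hΦ (hy.prodMk hz),
    fderiv_comp_prodMk_left hΦ, fderiv_fun_comp (f := fun t => (y θ, z t)) θ hΦ (by fun_prop),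
    DifferentiableAt.fderiv_prodMk hy hz, DifferentiableAt.fderiv_prodMk (by fun_prop) hz]
  ext v : 1
  simp [← map_add]

theorem fderiv_fderiv_apply {g : E → G} {x : E} (hg : DifferentiableAt 𝕜 (fderiv 𝕜 g) x)
    (v w : E) : fderiv 𝕜 (fun x' => fderiv 𝕜 g x' w) x v = fderiv 𝕜 (fderiv 𝕜 g) x v w := by
  rw [fderiv_clm_apply hg (differentiableAt_const w)]
  simp

theorem differentiable_fderiv_of_contDiff_two {g : E → G} (hg : ContDiff 𝕜 2 g) :
    Differentiable 𝕜 (fderiv 𝕜 g) :=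
  (hg.fderiv_right (m := 1) le_rfl).differentiable one_ne_zero

theorem jacobian_eq_toMatrix' {g : (Fin a → 𝕜) → (Fin b → 𝕜)} {z : Fin a → 𝕜}
    (hg : DifferentiableAt 𝕜 g z) :
    jacobian g z = LinearMap.toMatrix' (fderiv 𝕜 g z : (Fin a → 𝕜) →ₗ[𝕜] Fin b → 𝕜) := by
  ext i j
  simp [jacobian, LinearMap.toMatrix'_apply, fderiv_apply hg]

theorem jacobian_congr_of_eventuallyEq {g g' : (Fin a → 𝕜) → (Fin b → 𝕜)} {z : Fin a → 𝕜}
    (h : g =ᶠ[nhds z] g') : jacobian g z = jacobian g' z := by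
  ext i j
  have hi : (fun z' => g z' i) =ᶠ[nhds z] fun z' => g' z' i := h.mono fun _ hz => congrFun hz i
  simp only [jacobian, of_apply, hi.fderiv_eq]

@[simp]
theorem jacobian_const (v : Fin b → 𝕜) (z : Fin a → 𝕜) : jacobian (fun _ => v) z = 0 := by
  ext i j
  simp [jacobian]

theorem jacobian_add_vecMul (v : Fin b → 𝕜) (M : Matrix (Fin a) (Fin b) 𝕜) (z : Fin a → 𝕜) :
    jacobian (fun π => v + π ᵥ* M) z = Mᵀ := by
  ext i j
  have hl : ∀ l : Fin a, DifferentiableAt 𝕜 (fun π : Fin a → 𝕜 => π l) z := fun l => by fun_prop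
  change fderiv 𝕜 (fun π => v i + ∑ l, π l * M l i) z (Pi.single j 1) = M j i
  rw [fderiv_const_add, fderiv_fun_sum (fun l _ => by fun_prop)]
  simp [fderiv_mul_const (hl _), (hasFDerivAt_apply _ z).fderiv, Pi.single_apply]

theorem grad_add_sum_mul {g₀ : (Fin a → 𝕜) → 𝕜} {g : (Fin a → 𝕜) → (Fin b → 𝕜)}
    {z : Fin a → 𝕜} (hg₀ : DifferentiableAt 𝕜 g₀ z) (hg : DifferentiableAt 𝕜 g z)
    (π : Fin b → 𝕜) :
    grad (fun y => g₀ y + ∑ l, g y l * π l) z = grad g₀ z + π ᵥ* jacobian g z := by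
  ext i
  have hgl : ∀ l, DifferentiableAt 𝕜 (fun y => g y l) z := fun l => by fun_prop
  simp only [grad, jacobian, Pi.add_apply]
  rw [fderiv_fun_add hg₀ (by fun_prop), fderiv_fun_sum (fun l _ => (hgl l).mul_const _)]
  simp [vecMul, dotProduct, fderiv_mul_const (hgl _)]

theorem jacobian_comp {g : (Fin a → 𝕜) → (Fin b → 𝕜)} {y : (Fin N → 𝕜) → (Fin a → 𝕜)}
    {θ : Fin N → 𝕜} (hg : DifferentiableAt 𝕜 g (y θ)) (hy : DifferentiableAt 𝕜 y θ) :
    jacobian (fun t => g (y t)) θ = jacobian g (y θ) * jacobian y θ := by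
  rw [jacobian_eq_toMatrix' (hg.fun_comp' θ hy), jacobian_eq_toMatrix' hg,
    jacobian_eq_toMatrix' hy, ← LinearMap.toMatrix'_comp, fderiv_fun_comp θ hg hy]
  rfl

theorem jacobian_comp_prodMk {Φ : (Fin a → 𝕜) × E → (Fin b → 𝕜)}
    {y : (Fin N → 𝕜) → (Fin a → 𝕜)} {z : (Fin N → 𝕜) → E} {θ : Fin N → 𝕜}
    (hΦ : DifferentiableAt 𝕜 Φ (y θ, z θ)) (hy : DifferentiableAt 𝕜 y θ)
    (hz : DifferentiableAt 𝕜 z θ) :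
    jacobian (fun t => Φ (y t, z t)) θ =
      jacobian (fun y' => Φ (y', z θ)) (y θ) * jacobian y θ +
        jacobian (fun t => Φ (y θ, z t)) θ := by
  rw [jacobian_eq_toMatrix' (hΦ.fun_comp' θ (hy.prodMk hz)),
    jacobian_eq_toMatrix' (hΦ.fun_comp' (y θ) (by fun_prop)), jacobian_eq_toMatrix' hy,
    jacobian_eq_toMatrix' (hΦ.fun_comp' θ (by fun_prop)), ← LinearMap.toMatrix'_comp, ← map_add,
    fderiv_comp_prodMk hΦ hy hz]
  rfl

theorem jacobian_comp₂ {g : (Fin a → 𝕜) → (Fin b → 𝕜) → (Fin r → 𝕜)}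
    {x : (Fin N → 𝕜) → (Fin a → 𝕜)} {u : (Fin N → 𝕜) → (Fin b → 𝕜)} {θ : Fin N → 𝕜}
    (hg : DifferentiableAt 𝕜 (fun q : (Fin a → 𝕜) × (Fin b → 𝕜) => g q.1 q.2) (x θ, u θ))
    (hx : DifferentiableAt 𝕜 x θ) (hu : DifferentiableAt 𝕜 u θ) :
    jacobian (fun t => g (x t) (u t)) θ =
      jacobian (fun xv => g xv (u θ)) (x θ) * jacobian x θ +
        jacobian (fun uv => g (x θ) uv) (u θ) * jacobian u θ := by
  rw [jacobian_comp_prodMk (Φ := fun q => g q.1 q.2) hg hx hu,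
    jacobian_comp (g := fun uv => g (x θ) uv)
      (DifferentiableAt.fun_comp' (f := fun uv => (x θ, uv)) _ hg (by fun_prop)) hu]

theorem jacobian_comp_prodMk₄ {l : ℕ}
    {Φ : (Fin a → 𝕜) × (Fin b → 𝕜) × (Fin l → 𝕜) × (Fin N → 𝕜) → (Fin r → 𝕜)}
    {x : (Fin N → 𝕜) → (Fin a → 𝕜)} {u : (Fin N → 𝕜) → (Fin b → 𝕜)}
    {π : (Fin N → 𝕜) → (Fin l → 𝕜)} {θ : Fin N → 𝕜}
    (hΦ : DifferentiableAt 𝕜 Φ (x θ, u θ, π θ, θ)) (hx : DifferentiableAt 𝕜 x θ)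
    (hu : DifferentiableAt 𝕜 u θ) (hπ : DifferentiableAt 𝕜 π θ) :
    jacobian (fun t => Φ (x t, u t, π t, t)) θ =
      jacobian (fun x' => Φ (x', u θ, π θ, θ)) (x θ) * jacobian x θ +
        jacobian (fun u' => Φ (x θ, u', π θ, θ)) (u θ) * jacobian u θ +
        jacobian (fun π' => Φ (x θ, u θ, π', θ)) (π θ) * jacobian π θ +
        jacobian (fun θ' => Φ (x θ, u θ, π θ, θ')) θ := by
  rw [jacobian_comp_prodMk hΦ hx (by fun_prop),
    jacobian_comp_prodMk (Φ := fun q => Φ (x θ, q)) (y := u) (z := fun t => (π t, t)) (θ := θ)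
      (DifferentiableAt.fun_comp' (f := fun q => (x θ, q)) _ hΦ (by fun_prop)) hu (by fun_prop),
    jacobian_comp_prodMk (Φ := fun q => Φ (x θ, u θ, q)) (y := π) (z := fun t => t) (θ := θ)
      (DifferentiableAt.fun_comp' (f := fun q => (x θ, u θ, q)) _ hΦ (by fun_prop)) hπ
      differentiableAt_id]
  simp only [add_assoc]

theorem differentiable_grad_fst {g : (Fin a → 𝕜) × E → 𝕜} (hg : ContDiff 𝕜 2 g) :
    Differentiable 𝕜 (fun q : (Fin a → 𝕜) × E => grad (fun y => g (y, q.2)) q.1) := by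
  have hd : Differentiable 𝕜 g := hg.differentiable two_ne_zero
  have hgrad : (fun q : (Fin a → 𝕜) × E => grad (fun y => g (y, q.2)) q.1) =
      fun q i => fderiv 𝕜 g q (Pi.single i 1, 0) := by
    ext q i
    simp [grad, fderiv_comp_prodMk_left (hd _)]
  rw [hgrad]
  exact differentiable_pi.2 fun i =>
    (differentiable_fderiv_of_contDiff_two hg).clm_apply (differentiable_const _)

theorem jacobian_grad_comp {g : (Fin a → 𝕜) → (Fin N → 𝕜) → 𝕜}
    (hg : ContDiff 𝕜 2 (fun q : (Fin a → 𝕜) × (Fin N → 𝕜) => g q.1 q.2))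
    {x : (Fin N → 𝕜) → (Fin a → 𝕜)} {θ : Fin N → 𝕜} (hx : DifferentiableAt 𝕜 x θ) :
    jacobian (fun t => grad (fun y => g y t) (x t)) θ =
      jacobian (grad (fun y => g y θ)) (x θ) * jacobian x θ +
        jacobian (fun t => grad (fun y => g y t) (x θ)) θ :=
  jacobian_comp_prodMk (Φ := fun q => grad (fun y => g y q.2) q.1) (z := fun t => t)
    (differentiable_grad_fst hg _) hx differentiableAt_id

end Jacobian

section Symmetric

variable {𝕜 : Type*} [RCLike 𝕜] {E F : Type*} [NormedAddCommGroup E] [NormedSpace 𝕜 E]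
  [NormedAddCommGroup F] [NormedSpace 𝕜 F] {a b : ℕ}

theorem fderiv_fderiv_apply_comm {g : E → 𝕜} (hg : ContDiff 𝕜 2 g) (x v w : E) :
    fderiv 𝕜 (fun x' => fderiv 𝕜 g x' w) x v = fderiv 𝕜 (fun x' => fderiv 𝕜 g x' v) x w := by
  have hd := differentiable_fderiv_of_contDiff_two hg x
  rw [fderiv_fderiv_apply hd, fderiv_fderiv_apply hd]
  exact (hg.contDiffAt.isSymmSndFDerivAt (by simp)) v w

theorem fderiv_fderiv_prodMk_comm {g : E × F → 𝕜} (hg : ContDiff 𝕜 2 g) (y : E) (z : F)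
    (v : E) (w : F) :
    fderiv 𝕜 (fun z' => fderiv 𝕜 (fun y' => g (y', z')) y v) z w =
      fderiv 𝕜 (fun y' => fderiv 𝕜 (fun z' => g (y', z')) z w) y v := by
  have hd : Differentiable 𝕜 g := hg.differentiable two_ne_zero
  have hd' := differentiable_fderiv_of_contDiff_two hg
  have hy : (fun z' => fderiv 𝕜 (fun y' => g (y', z')) y v) =
      fun z' => fderiv 𝕜 g (y, z') (v, 0) :=
    funext fun z' => by rw [fderiv_comp_prodMk_left (hd _)]; rfl
  have hz : (fun y' => fderiv 𝕜 (fun z' => g (y', z')) z w) =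
      fun y' => fderiv 𝕜 g (y', z) (0, w) :=
    funext fun y' => by rw [fderiv_comp_prodMk_right (hd _)]; rfl
  rw [hy, hz, fderiv_comp_prodMk_right (g := fun q => fderiv 𝕜 g q (v, 0)) (by fun_prop),
    fderiv_comp_prodMk_left (g := fun q => fderiv 𝕜 g q (0, w)) (by fun_prop)]
  exact fderiv_fderiv_apply_comm hg (y, z) (0, w) (v, 0)

theorem jacobian_grad_prodMk_comm {g : (Fin a → 𝕜) × (Fin b → 𝕜) → 𝕜} (hg : ContDiff 𝕜 2 g)
    (y : Fin a → 𝕜) (z : Fin b → 𝕜) :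
    jacobian (fun z' => grad (fun y' => g (y', z')) y) z =
      (jacobian (fun y' => grad (fun z' => g (y', z')) z) y)ᵀ := by
  ext i j
  exact fderiv_fderiv_prodMk_comm hg y z _ _

theorem isSymm_jacobian_grad {g : (Fin a → 𝕜) → 𝕜} (hg : ContDiff 𝕜 2 g) (z : Fin a → 𝕜) :
    (jacobian (grad g) z).IsSymm := by
  ext i j
  exact fderiv_fderiv_apply_comm hg z _ _

end Symmetric

section Hamiltonian

variable {𝕜 : Type*} [RCLike 𝕜] {n m N : ℕ}
  {f : (Fin n → 𝕜) → (Fin m → 𝕜) → (Fin n → 𝕜)}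
  {c : (Fin n → 𝕜) → (Fin m → 𝕜) → (Fin N → 𝕜) → 𝕜}

def hamiltonian (c : (Fin n → 𝕜) → (Fin m → 𝕜) → (Fin N → 𝕜) → 𝕜)
    (f : (Fin n → 𝕜) → (Fin m → 𝕜) → (Fin n → 𝕜)) (x : Fin n → 𝕜) (u : Fin m → 𝕜)
    (π : Fin n → 𝕜) (θ : Fin N → 𝕜) : 𝕜 :=
  c x u θ + ∑ i, f x u i * π i

theorem contDiff_hamiltonian (hf : ContDiff 𝕜 2 (fun q : (Fin n → 𝕜) × (Fin m → 𝕜) => f q.1 q.2))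
    (hc : ContDiff 𝕜 2
      (fun q : (Fin n → 𝕜) × (Fin m → 𝕜) × (Fin N → 𝕜) => c q.1 q.2.1 q.2.2)) :
    ContDiff 𝕜 2 (fun q : (Fin n → 𝕜) × (Fin m → 𝕜) × (Fin n → 𝕜) × (Fin N → 𝕜) =>
      hamiltonian c f q.1 q.2.1 q.2.2.1 q.2.2.2) := by
  unfold hamiltonian
  have hc' : ContDiff 𝕜 2 (fun q : (Fin n → 𝕜) × (Fin m → 𝕜) × (Fin n → 𝕜) × (Fin N → 𝕜) =>
      c q.1 q.2.1 q.2.2.2) := hc.comp (by fun_prop : ContDiff 𝕜 2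
        (fun q : (Fin n → 𝕜) × (Fin m → 𝕜) × (Fin n → 𝕜) × (Fin N → 𝕜) => (q.1, q.2.1, q.2.2.2)))
  have hf' : ContDiff 𝕜 2 (fun q : (Fin n → 𝕜) × (Fin m → 𝕜) × (Fin n → 𝕜) × (Fin N → 𝕜) =>
      f q.1 q.2.1) := hf.comp (by fun_prop : ContDiff 𝕜 2
        (fun q : (Fin n → 𝕜) × (Fin m → 𝕜) × (Fin n → 𝕜) × (Fin N → 𝕜) => (q.1, q.2.1)))
  fun_prop

theorem grad_hamiltonian_fst (hf : ContDiff 𝕜 2 (fun q : (Fin n → 𝕜) × (Fin m → 𝕜) => f q.1 q.2))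
    (hc : ContDiff 𝕜 2
      (fun q : (Fin n → 𝕜) × (Fin m → 𝕜) × (Fin N → 𝕜) => c q.1 q.2.1 q.2.2))
    (x : Fin n → 𝕜) (u : Fin m → 𝕜) (π : Fin n → 𝕜) (θ : Fin N → 𝕜) :
    grad (fun xv => hamiltonian c f xv u π θ) x =
      grad (fun xv => c xv u θ) x + π ᵥ* jacobian (fun xv => f xv u) x := by
  unfold hamiltonian
  exact grad_add_sum_mul
    (DifferentiableAt.fun_comp' (f := fun xv => (xv, u, θ)) x
      ((hc.differentiable two_ne_zero) _) (by fun_prop))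
    (DifferentiableAt.fun_comp' (f := fun xv => (xv, u)) x
      ((hf.differentiable two_ne_zero) _) (by fun_prop)) π

theorem grad_hamiltonian_snd (hf : ContDiff 𝕜 2 (fun q : (Fin n → 𝕜) × (Fin m → 𝕜) => f q.1 q.2))
    (hc : ContDiff 𝕜 2
      (fun q : (Fin n → 𝕜) × (Fin m → 𝕜) × (Fin N → 𝕜) => c q.1 q.2.1 q.2.2))
    (x : Fin n → 𝕜) (u : Fin m → 𝕜) (π : Fin n → 𝕜) (θ : Fin N → 𝕜) :
    grad (fun uv => hamiltonian c f x uv π θ) u =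
      grad (fun uv => c x uv θ) u + π ᵥ* jacobian (fun uv => f x uv) u := by
  unfold hamiltonian
  exact grad_add_sum_mul
    (DifferentiableAt.fun_comp' (f := fun uv => (x, uv, θ)) u
      ((hc.differentiable two_ne_zero) _) (by fun_prop))
    (DifferentiableAt.fun_comp' (f := fun uv => (x, uv)) u
      ((hf.differentiable two_ne_zero) _) (by fun_prop)) π

theorem isSymm_jacobian_grad_hamiltonian_snd
    (hf : ContDiff 𝕜 2 (fun q : (Fin n → 𝕜) × (Fin m → 𝕜) => f q.1 q.2))
    (hc : ContDiff 𝕜 2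
      (fun q : (Fin n → 𝕜) × (Fin m → 𝕜) × (Fin N → 𝕜) => c q.1 q.2.1 q.2.2))
    (x : Fin n → 𝕜) (u : Fin m → 𝕜) (π : Fin n → 𝕜) (θ : Fin N → 𝕜) :
    (jacobian (grad (fun uv => hamiltonian c f x uv π θ)) u).IsSymm :=
  isSymm_jacobian_grad ((contDiff_hamiltonian hf hc).comp
    (by fun_prop : ContDiff 𝕜 2 fun uv : Fin m → 𝕜 => (x, uv, π, θ))) u

variable {x : (Fin N → 𝕜) → (Fin n → 𝕜)} {u : (Fin N → 𝕜) → (Fin m → 𝕜)}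
  {p p' : (Fin N → 𝕜) → (Fin n → 𝕜)} {θ : Fin N → 𝕜}

theorem jacobian_costate
    (hf : ContDiff 𝕜 2 (fun q : (Fin n → 𝕜) × (Fin m → 𝕜) => f q.1 q.2))
    (hc : ContDiff 𝕜 2
      (fun q : (Fin n → 𝕜) × (Fin m → 𝕜) × (Fin N → 𝕜) => c q.1 q.2.1 q.2.2))
    (hx : DifferentiableAt 𝕜 x θ) (hu : DifferentiableAt 𝕜 u θ) (hp' : DifferentiableAt 𝕜 p' θ)
    (h : ∀ᶠ t in nhds θ,
      p t = grad (fun xv => c xv (u t) t) (x t) + p' t ᵥ* jacobian (fun xv => f xv (u t)) (x t)) :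
    jacobian p θ =
      jacobian (grad (fun xv => hamiltonian c f xv (u θ) (p' θ) θ)) (x θ) * jacobian x θ +
        (jacobian (fun xv => grad (fun uv => hamiltonian c f xv uv (p' θ) θ) (u θ)) (x θ))ᵀ *
          jacobian u θ +
        (jacobian (fun xv => f xv (u θ)) (x θ))ᵀ * jacobian p' θ +
        jacobian (fun θv => grad (fun xv => hamiltonian c f xv (u θ) (p' θ) θv) (x θ)) θ := by
  have hH := contDiff_hamiltonian hf hc
  have hev : p =ᶠ[nhds θ] fun t =>
      (fun q => grad (fun xv => hamiltonian c f xv q.2.1 q.2.2.1 q.2.2.2) q.1)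
        (x t, u t, p' t, t) :=
    h.mono fun t ht => ht.trans (grad_hamiltonian_fst hf hc _ _ _ _).symm
  rw [jacobian_congr_of_eventuallyEq hev,
    jacobian_comp_prodMk₄ (differentiable_grad_fst hH _) hx hu hp']
  have hu_block := jacobian_grad_prodMk_comm (g := fun q => hamiltonian c f q.1 q.2 (p' θ) θ)
    (hH.comp (by fun_prop : ContDiff 𝕜 2 fun q : (Fin n → 𝕜) × (Fin m → 𝕜) =>
      (q.1, q.2, p' θ, θ))) (x θ) (u θ)
  have hp_block : jacobian (fun π => grad (fun xv => hamiltonian c f xv (u θ) π θ) (x θ)) (p' θ) =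
      (jacobian (fun xv => f xv (u θ)) (x θ))ᵀ := by
    simp only [grad_hamiltonian_fst hf hc, jacobian_add_vecMul]
  dsimp only at hu_block ⊢
  rw [hu_block, hp_block]

theorem jacobian_stationarity
    (hf : ContDiff 𝕜 2 (fun q : (Fin n → 𝕜) × (Fin m → 𝕜) => f q.1 q.2))
    (hc : ContDiff 𝕜 2
      (fun q : (Fin n → 𝕜) × (Fin m → 𝕜) × (Fin N → 𝕜) => c q.1 q.2.1 q.2.2))
    (hx : DifferentiableAt 𝕜 x θ) (hu : DifferentiableAt 𝕜 u θ) (hp' : DifferentiableAt 𝕜 p' θ)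
    (h : ∀ᶠ t in nhds θ,
      grad (fun uv => c (x t) uv t) (u t) + p' t ᵥ* jacobian (fun uv => f (x t) uv) (u t) = 0) :
    jacobian (fun xv => grad (fun uv => hamiltonian c f xv uv (p' θ) θ) (u θ)) (x θ) *
          jacobian x θ +
        jacobian (grad (fun uv => hamiltonian c f (x θ) uv (p' θ) θ)) (u θ) * jacobian u θ +
        (jacobian (fun uv => f (x θ) uv) (u θ))ᵀ * jacobian p' θ +
        jacobian (fun θv => grad (fun uv => hamiltonian c f (x θ) uv (p' θ) θv) (u θ)) θ = 0 := by
  have hH : ContDiff 𝕜 2 (fun r : (Fin m → 𝕜) × (Fin n → 𝕜) × (Fin n → 𝕜) × (Fin N → 𝕜) =>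
      hamiltonian c f r.2.1 r.1 r.2.2.1 r.2.2.2) :=
    (contDiff_hamiltonian hf hc).comp (by fun_prop : ContDiff 𝕜 2
      fun r : (Fin m → 𝕜) × (Fin n → 𝕜) × (Fin n → 𝕜) × (Fin N → 𝕜) => (r.2.1, r.1, r.2.2))
  have hF : DifferentiableAt 𝕜
      (fun q : (Fin n → 𝕜) × (Fin m → 𝕜) × (Fin n → 𝕜) × (Fin N → 𝕜) =>
        grad (fun uv => hamiltonian c f q.1 uv q.2.2.1 q.2.2.2) q.2.1) (x θ, u θ, p' θ, θ) :=
    ((differentiable_grad_fst hH).comp (by fun_prop : Differentiable 𝕜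
      fun q : (Fin n → 𝕜) × (Fin m → 𝕜) × (Fin n → 𝕜) × (Fin N → 𝕜) => (q.2.1, q.1, q.2.2))) _
  have hev : (fun _ => 0) =ᶠ[nhds θ] fun t =>
      (fun q : (Fin n → 𝕜) × (Fin m → 𝕜) × (Fin n → 𝕜) × (Fin N → 𝕜) =>
        grad (fun uv => hamiltonian c f q.1 uv q.2.2.1 q.2.2.2) q.2.1) (x t, u t, p' t, t) :=
    h.mono fun t ht => (ht.symm.trans (grad_hamiltonian_snd hf hc _ _ _ _).symm)
  have hp_block : jacobian (fun π => grad (fun uv => hamiltonian c f (x θ) uv π θ) (u θ)) (p' θ) =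
      (jacobian (fun uv => f (x θ) uv) (u θ))ᵀ := by
    simp only [grad_hamiltonian_snd hf hc, jacobian_add_vecMul]
  have := jacobian_congr_of_eventuallyEq hev
  rw [jacobian_const, jacobian_comp_prodMk₄ hF hx hu hp'] at this
  dsimp only at this
  rw [hp_block] at this
  exact this.symm

end Hamiltonian

section Riccati

variable {𝕜 : Type*} [Field 𝕜] {ι κ ν : Type*} [Fintype ι] [DecidableEq ι] [Fintype κ]
  [DecidableEq κ]

theorem riccati_step {A cA cR : Matrix ι ι 𝕜} {B : Matrix ι κ 𝕜} {Huu : Matrix κ κ 𝕜}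
    {Hux : Matrix κ ι 𝕜} {Hue : Matrix κ ν 𝕜} {cM W X X' Λ' : Matrix ι ν 𝕜} {U : Matrix κ ν 𝕜}
    {P : Matrix ι ι 𝕜}
    (hcA : cA = A - B * Huu⁻¹ * Hux) (hcR : cR = B * Huu⁻¹ * Bᵀ) (hcM : cM = -(B * Huu⁻¹ * Hue))
    (hHuu : IsUnit Huu) (hPR : IsUnit (1 + P * cR))
    (hdyn : X' = A * X + B * U) (hstat : Hux * X + Huu * U + Bᵀ * Λ' + Hue = 0)
    (hΛ' : Λ' = P * X' + W) :
    U = -(Huu⁻¹ * (Hux * X + Hue + Bᵀ * Λ')) ∧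
      Λ' = (1 + P * cR)⁻¹ * (P * cA * X + P * cM + W) := by
  have hU : U = -(Huu⁻¹ * (Hux * X + Hue + Bᵀ * Λ')) := by
    have hHuuU : Huu * U = -(Hux * X + Hue + Bᵀ * Λ') := by
      rw [← add_eq_zero_iff_eq_neg, ← hstat]
      abel
    rw [← Matrix.mul_neg, ← hHuuU,
      nonsing_inv_mul_cancel_left _ U ((isUnit_iff_isUnit_det _).mp hHuu)]
  refine ⟨hU, ?_⟩
  rw [← nonsing_inv_mul_cancel_left _ Λ' ((isUnit_iff_isUnit_det _).mp hPR)]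
  congr 1
  have hX' : X' = cA * X + cM - cR * Λ' := by
    rw [hdyn, hU, hcA, hcR, hcM]
    simp only [Matrix.mul_neg, Matrix.mul_add, Matrix.sub_mul, ← Matrix.mul_assoc]
    abel
  rw [Matrix.add_mul, Matrix.one_mul]
  nth_rewrite 1 [hΛ']
  rw [hX']
  simp only [Matrix.mul_sub, Matrix.mul_add, ← Matrix.mul_assoc]
  abel

theorem riccati_costate_step {A cA cR cQ Hxx P P' : Matrix ι ι 𝕜} {B : Matrix ι κ 𝕜}
    {Huu : Matrix κ κ 𝕜} {Hux : Matrix κ ι 𝕜} {Hue : Matrix κ ν 𝕜}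
    {Hxe cM cN W W' X Λ Λ' : Matrix ι ν 𝕜} {U : Matrix κ ν 𝕜}
    (hcA : cA = A - B * Huu⁻¹ * Hux) (hcQ : cQ = Hxx - Huxᵀ * Huu⁻¹ * Hux)
    (hcN : cN = Hxe - Huxᵀ * Huu⁻¹ * Hue) (hHuu : Huu.IsSymm)
    (hP : P = cQ + cAᵀ * (1 + P' * cR)⁻¹ * (P' * cA))
    (hW : W = cAᵀ * (1 + P' * cR)⁻¹ * (W' + P' * cM) + cN)
    (hU : U = -(Huu⁻¹ * (Hux * X + Hue + Bᵀ * Λ')))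
    (hΛ' : Λ' = (1 + P' * cR)⁻¹ * (P' * cA * X + P' * cM + W'))
    (hΛ : Λ = Hxx * X + Huxᵀ * U + Aᵀ * Λ' + Hxe) :
    Λ = P * X + W := by
  have hcAT : cAᵀ = Aᵀ - Huxᵀ * Huu⁻¹ * Bᵀ := by
    rw [hcA, transpose_sub, transpose_mul, transpose_mul, transpose_nonsing_inv, hHuu.eq,
      ← Matrix.mul_assoc]
  have hPW : P * X + W = cQ * X + cN + cAᵀ * Λ' := by
    rw [hP, hW, hΛ']
    simp only [Matrix.add_mul, Matrix.mul_add, ← Matrix.mul_assoc]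
    abel
  rw [hPW, hΛ, hU, hcAT, hcQ, hcN]
  simp only [Matrix.mul_neg, Matrix.mul_add, Matrix.sub_mul, ← Matrix.mul_assoc]
  abel

theorem forwardSweep_eq_of_diffPMP {T : ℕ} {A cA cR cQ Hxx cP : ℕ → Matrix ι ι 𝕜}
    {B : ℕ → Matrix ι κ 𝕜} {Huu : ℕ → Matrix κ κ 𝕜} {Hux : ℕ → Matrix κ ι 𝕜}
    {Hue : ℕ → Matrix κ ν 𝕜} {Hxe cM cN cW X Dx Dp : ℕ → Matrix ι ν 𝕜}
    {HTxx : Matrix ι ι 𝕜} {HTxe : Matrix ι ν 𝕜} {U Du : ℕ → Matrix κ ν 𝕜}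
    (hcA : ∀ k, cA k = A k - B k * (Huu k)⁻¹ * Hux k)
    (hcR : ∀ k, cR k = B k * (Huu k)⁻¹ * (B k)ᵀ)
    (hcM : ∀ k, cM k = -(B k * (Huu k)⁻¹ * Hue k))
    (hcQ : ∀ k, cQ k = Hxx k - (Hux k)ᵀ * (Huu k)⁻¹ * Hux k)
    (hcN : ∀ k, cN k = Hxe k - (Hux k)ᵀ * (Huu k)⁻¹ * Hue k)
    (hcPT : cP T = HTxx) (hcWT : cW T = HTxe)
    (hcP : ∀ k < T, cP k =
      cQ k + (cA k)ᵀ * (1 + cP (k + 1) * cR k)⁻¹ * (cP (k + 1) * cA k))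
    (hcW : ∀ k < T, cW k =
      (cA k)ᵀ * (1 + cP (k + 1) * cR k)⁻¹ * (cW (k + 1) + cP (k + 1) * cM k) + cN k)
    (hHuuInv : ∀ k < T, IsUnit (Huu k)) (hIPR : ∀ k < T, IsUnit (1 + cP (k + 1) * cR k))
    (hHuuSymm : ∀ k < T, (Huu k).IsSymm)
    (hX0 : X 0 = 0)
    (hU : ∀ k < T, U k =
      -((Huu k)⁻¹ * (Hux k * X k + Hue k + (B k)ᵀ * (1 + cP (k + 1) * cR k)⁻¹ *
        (cP (k + 1) * cA k * X k + cP (k + 1) * cM k + cW (k + 1)))))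
    (hX : ∀ k < T, X (k + 1) = A k * X k + B k * U k)
    (hDx0 : Dx 0 = 0)
    (hdyn : ∀ k < T, Dx (k + 1) = A k * Dx k + B k * Du k)
    (hstat : ∀ k < T, Hux k * Dx k + Huu k * Du k + (B k)ᵀ * Dp (k + 1) + Hue k = 0)
    (hcostate : ∀ k, 1 ≤ k → k < T →
      Dp k = Hxx k * Dx k + (Hux k)ᵀ * Du k + (A k)ᵀ * Dp (k + 1) + Hxe k)
    (hterm : Dp T = HTxx * Dx T + HTxe) :
    (∀ k ≤ T, X k = Dx k) ∧ ∀ k < T, U k = Du k := by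
  have hback : ∀ k ≤ T, 1 ≤ k → Dp k = cP k * Dx k + cW k := by
    intro k hk
    induction hk using Nat.decreasingInduction with
    | self => intro; rw [hterm, hcPT, hcWT]
    | of_succ k hk ih =>
      intro h1
      have := riccati_step (hcA k) (hcR k) (hcM k) (hHuuInv k hk) (hIPR k hk) (hdyn k hk)
        (hstat k hk) (ih (by omega))
      exact riccati_costate_step (hcA k) (hcQ k) (hcN k) (hHuuSymm k hk) (hcP k hk) (hcW k hk)
        this.1 this.2 (hcostate k h1 hk)
  have hstep : ∀ k < T, X k = Dx k → U k = Du k := by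
    intro k hk hXk
    obtain ⟨hDu, hDp⟩ := riccati_step (hcA k) (hcR k) (hcM k) (hHuuInv k hk) (hIPR k hk)
      (hdyn k hk) (hstat k hk) (hback (k + 1) hk (by omega))
    rw [hU k hk, hDu, hDp, hXk, Matrix.mul_assoc (B k)ᵀ]
  have hXD : ∀ k ≤ T, X k = Dx k := by
    intro k hk
    induction k with
    | zero => rw [hX0, hDx0]
    | succ k ih =>
      have hXk := ih (by omega)
      rw [hX k hk, hdyn k hk, hXk, hstep k hk hXk]
  exact ⟨hXD, fun k hk => hstep k hk (hXD k hk.le)⟩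

end Riccati

end PDP

open PDP

theorem pdp_trajectory_derivatives_general
    {n m N : ℕ} {T : ℕ}
    (f : (Fin n → ℝ) → (Fin m → ℝ) → (Fin n → ℝ))
    (c : ℕ → (Fin n → ℝ) → (Fin m → ℝ) → (Fin N → ℝ) → ℝ)
    (cT : (Fin n → ℝ) → (Fin N → ℝ) → ℝ)
    (hf : ContDiff ℝ 2 (fun q : (Fin n → ℝ) × (Fin m → ℝ) => f q.1 q.2))
    (hc : ∀ t, ContDiff ℝ 2
      (fun q : (Fin n → ℝ) × (Fin m → ℝ) × (Fin N → ℝ) => c t q.1 q.2.1 q.2.2))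
    (hcT : ContDiff ℝ 2 (fun q : (Fin n → ℝ) × (Fin N → ℝ) => cT q.1 q.2))
    -- the Hamiltonian `H(k, x, u, p, θ) = c_k(x, u, θ) + f(x, u)ᵀ p`
    (Ham : ℕ → (Fin n → ℝ) → (Fin m → ℝ) → (Fin n → ℝ) → (Fin N → ℝ) → ℝ)
    (hHam : ∀ k xv uv pv θv,
      Ham k xv uv pv θv = c k xv uv θv + ∑ i, f xv uv i * pv i)
    (x₀ : Fin n → ℝ) (θbar : Fin N → ℝ)
    -- the parameterized trajectories and costates
    (x : ℕ → (Fin N → ℝ) → (Fin n → ℝ))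
    (u : ℕ → (Fin N → ℝ) → (Fin m → ℝ))
    (p : ℕ → (Fin N → ℝ) → (Fin n → ℝ))
    -- differentiability at θ̄
    (hxdiff : ∀ k ≤ T, DifferentiableAt ℝ (x k) θbar)
    (hudiff : ∀ k < T, DifferentiableAt ℝ (u k) θbar)
    (hpdiff : ∀ k, 1 ≤ k → k ≤ T → DifferentiableAt ℝ (p k) θbar)
    -- the Pontryagin conditions hold for all `θ` in a neighborhood of `θ̄`
    (hpontryagin : ∀ᶠ θ in nhds θbar,
      (x 0 θ = x₀) ∧
      (∀ k < T, x (k + 1) θ = f (x k θ) (u k θ)) ∧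
      (∀ k, 1 ≤ k → k < T → p k θ = fun i =>
        fderiv ℝ (fun xv => c k xv (u k θ) θ) (x k θ) (Pi.single i 1) +
        ∑ i', p (k + 1) θ i' *
          fderiv ℝ (fun xv => f xv (u k θ) i') (x k θ) (Pi.single i 1)) ∧
      (∀ k < T, ∀ j : Fin m,
        fderiv ℝ (fun uv => c k (x k θ) uv θ) (u k θ) (Pi.single j 1) +
          ∑ i', p (k + 1) θ i' *
            fderiv ℝ (fun uv => f (x k θ) uv i') (u k θ) (Pi.single j 1) = 0) ∧
      (p T θ = fun i => fderiv ℝ (fun xv => cT xv θ) (x T θ) (Pi.single i 1)))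
    -- the Jacobians of `f` at `(x_k(θ̄), u_k(θ̄))`
    (A : ℕ → Matrix (Fin n) (Fin n) ℝ)
    (hA : ∀ k, A k = Matrix.of fun i j =>
      fderiv ℝ (fun xv => f xv (u k θbar) i) (x k θbar) (Pi.single j 1))
    (B : ℕ → Matrix (Fin n) (Fin m) ℝ)
    (hB : ∀ k, B k = Matrix.of fun i j =>
      fderiv ℝ (fun uv => f (x k θbar) uv i) (u k θbar) (Pi.single j 1))
    -- the second-derivative blocks of the Hamiltonian at
    -- `(k, x_k(θ̄), u_k(θ̄), p_{k+1}(θ̄), θ̄)`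
    (Hxx : ℕ → Matrix (Fin n) (Fin n) ℝ)
    (hHxx : ∀ k, Hxx k = Matrix.of fun i j =>
      fderiv ℝ (fun xv => fderiv ℝ
          (fun xv' => Ham k xv' (u k θbar) (p (k + 1) θbar) θbar) xv (Pi.single i 1))
        (x k θbar) (Pi.single j 1))
    (Hux : ℕ → Matrix (Fin m) (Fin n) ℝ)
    (hHux : ∀ k, Hux k = Matrix.of fun j i =>
      fderiv ℝ (fun xv => fderiv ℝ
          (fun uv => Ham k xv uv (p (k + 1) θbar) θbar) (u k θbar) (Pi.single j 1))
        (x k θbar) (Pi.single i 1))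
    (Huu : ℕ → Matrix (Fin m) (Fin m) ℝ)
    (hHuu : ∀ k, Huu k = Matrix.of fun j j' =>
      fderiv ℝ (fun uv => fderiv ℝ
          (fun uv' => Ham k (x k θbar) uv' (p (k + 1) θbar) θbar) uv (Pi.single j 1))
        (u k θbar) (Pi.single j' 1))
    (Hxe : ℕ → Matrix (Fin n) (Fin N) ℝ)
    (hHxe : ∀ k, Hxe k = Matrix.of fun i a =>
      fderiv ℝ (fun θv => fderiv ℝ
          (fun xv => Ham k xv (u k θbar) (p (k + 1) θbar) θv) (x k θbar) (Pi.single i 1))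
        θbar (Pi.single a 1))
    (Hue : ℕ → Matrix (Fin m) (Fin N) ℝ)
    (hHue : ∀ k, Hue k = Matrix.of fun j a =>
      fderiv ℝ (fun θv => fderiv ℝ
          (fun uv => Ham k (x k θbar) uv (p (k + 1) θbar) θv) (u k θbar) (Pi.single j 1))
        θbar (Pi.single a 1))
    -- the second-derivative blocks of the terminal cost at `(x_T(θ̄), θ̄)`
    (HTxx : Matrix (Fin n) (Fin n) ℝ)
    (hHTxx : HTxx = Matrix.of fun i j =>
      fderiv ℝ (fun xv => fderiv ℝ (fun xv' => cT xv' θbar) xv (Pi.single i 1))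
        (x T θbar) (Pi.single j 1))
    (HTxe : Matrix (Fin n) (Fin N) ℝ)
    (hHTxe : HTxe = Matrix.of fun i a =>
      fderiv ℝ (fun θv => fderiv ℝ (fun xv => cT xv θv) (x T θbar) (Pi.single i 1))
        θbar (Pi.single a 1))
    -- abbreviations 𝒜, ℛ, ℳ, 𝒬, 𝒩
    (cA : ℕ → Matrix (Fin n) (Fin n) ℝ)
    (hcA : ∀ k, cA k = A k - B k * (Huu k)⁻¹ * Hux k)
    (cR : ℕ → Matrix (Fin n) (Fin n) ℝ)
    (hcR : ∀ k, cR k = B k * (Huu k)⁻¹ * (B k)ᵀ)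
    (cM : ℕ → Matrix (Fin n) (Fin N) ℝ)
    (hcM : ∀ k, cM k = -(B k * (Huu k)⁻¹ * Hue k))
    (cQ : ℕ → Matrix (Fin n) (Fin n) ℝ)
    (hcQ : ∀ k, cQ k = Hxx k - (Hux k)ᵀ * (Huu k)⁻¹ * Hux k)
    (cN : ℕ → Matrix (Fin n) (Fin N) ℝ)
    (hcN : ∀ k, cN k = Hxe k - (Hux k)ᵀ * (Huu k)⁻¹ * Hue k)
    -- backward Riccati recursions for 𝒫 and 𝒲
    (cP : ℕ → Matrix (Fin n) (Fin n) ℝ) (cW : ℕ → Matrix (Fin n) (Fin N) ℝ)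
    (hcPT : cP T = HTxx) (hcWT : cW T = HTxe)
    (hcP : ∀ k < T, cP k =
      cQ k + (cA k)ᵀ * (1 + cP (k + 1) * cR k)⁻¹ * (cP (k + 1) * cA k))
    (hcW : ∀ k < T, cW k =
      (cA k)ᵀ * (1 + cP (k + 1) * cR k)⁻¹ * (cW (k + 1) + cP (k + 1) * cM k) + cN k)
    -- invertibility assumptions
    (hHuuInv : ∀ k < T, IsUnit (Huu k))
    (hIPR : ∀ k < T, IsUnit (1 + cP (k + 1) * cR k))
    -- the matrices generated by the forward recursion
    (X : ℕ → Matrix (Fin n) (Fin N) ℝ) (U : ℕ → Matrix (Fin m) (Fin N) ℝ)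
    (hX0 : X 0 = 0)
    (hU : ∀ k < T, U k =
      -((Huu k)⁻¹ * (Hux k * X k + Hue k + (B k)ᵀ * (1 + cP (k + 1) * cR k)⁻¹ *
        (cP (k + 1) * cA k * X k + cP (k + 1) * cM k + cW (k + 1)))))
    (hX : ∀ k < T, X (k + 1) = A k * X k + B k * U k) :
    -- the Jacobians ∂x_k/∂θ(θ̄) and ∂u_k/∂θ(θ̄) are exactly X_k and U_k
    (∀ k ≤ T, X k = Matrix.of fun i a =>
      fderiv ℝ (fun θv => x k θv i) θbar (Pi.single a 1)) ∧
    (∀ k < T, U k = Matrix.of fun j a =>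
      fderiv ℝ (fun θv => u k θv j) θbar (Pi.single a 1)) := by
  obtain rfl : Ham = fun k => hamiltonian (c k) f := by
    funext k xv uv pv θv
    exact hHam k xv uv pv θv
  refine forwardSweep_eq_of_diffPMP (Dx := fun k => jacobian (x k) θbar)
    (Du := fun k => jacobian (u k) θbar) (Dp := fun k => jacobian (p k) θbar) hcA hcR hcM hcQ hcN
    hcPT hcWT hcP hcW hHuuInv hIPR (fun k _ => ?_) hX0 hU hX ?_ (fun k hk => ?_)
    (fun k hk => ?_) (fun k h1 hk => ?_) ?_
  · rw [hHuu k]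
    exact isSymm_jacobian_grad_hamiltonian_snd hf (hc k) _ _ _ _
  · rw [jacobian_congr_of_eventuallyEq (hpontryagin.mono fun θ h => h.1), jacobian_const]
  · rw [hA k, hB k]
    exact (jacobian_congr_of_eventuallyEq (hpontryagin.mono fun θ h => h.2.1 k hk)).trans
      (jacobian_comp₂ (hf.differentiable two_ne_zero _) (hxdiff k hk.le) (hudiff k hk))
  · rw [hHux k, hHuu k, hB k, hHue k]
    exact jacobian_stationarity hf (hc k) (hxdiff k hk.le) (hudiff k hk)
      (hpdiff (k + 1) (by omega) hk) (hpontryagin.mono fun θ h => funext (h.2.2.2.1 k hk))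
  · rw [hHxx k, hHux k, hA k, hHxe k]
    exact jacobian_costate hf (hc k) (hxdiff k hk.le) (hudiff k hk)
      (hpdiff (k + 1) (by omega) hk) (hpontryagin.mono fun θ h => h.2.2.1 k h1 hk)
  · rw [hHTxx, hHTxe]
    exact (jacobian_congr_of_eventuallyEq (hpontryagin.mono fun θ h => h.2.2.2.2)).trans
      (jacobian_grad_comp hcT (hxdiff T le_rfl))

/-- **Proposition 1 (trajectory derivatives via Pontryagin differentiable programming).**
Suppose maps `θ ↦ x_k(θ)`, `θ ↦ u_k(θ)`, `θ ↦ p_k(θ)` are differentiable at `θ̄` and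
satisfy, for all `θ` in a neighborhood of `θ̄`, the discrete-time Pontryagin conditions.
Let `A_k, B_k` be the Jacobians of `f` and `H_k^{xx}, H_k^{xu} = (H_k^{ux})ᵀ, H_k^{uu},
H_k^{xe}, H_k^{ue}, H_T^{xx}, H_T^{xe}` the second derivatives of the Hamiltonian `H` and
of `c_T` along `(x_k(θ̄), u_k(θ̄), p_{k+1}(θ̄), θ̄)`.  Assume `H_k^{uu}` and
`I + 𝒫_{k+1}ℛ_k` are invertible for all `k = 0,…,T−1`, where `𝒫, 𝒲` are given by the
backward Riccati recursions.  Then the Jacobians `∂x_k/∂θ(θ̄)` and `∂u_k/∂θ(θ̄)` are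
exactly the matrices `X_k, U_k` generated forward by `X_0 = 0`,
`U_k = −(H_k^{uu})⁻¹(H_k^{ux}X_k + H_k^{ue} + B_kᵀ(I + 𝒫_{k+1}ℛ_k)⁻¹(𝒫_{k+1}𝒜_kX_k +
𝒫_{k+1}ℳ_k + 𝒲_{k+1}))`, `X_{k+1} = A_kX_k + B_kU_k`. -/
theorem pdp_trajectory_derivatives
    {n m N : ℕ} {T : ℕ} (hT : 1 ≤ T)
    (f : (Fin n → ℝ) → (Fin m → ℝ) → (Fin n → ℝ))
    (c : ℕ → (Fin n → ℝ) → (Fin m → ℝ) → (Fin N → ℝ) → ℝ)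
    (cT : (Fin n → ℝ) → (Fin N → ℝ) → ℝ)
    (hf : ContDiff ℝ 2 (fun q : (Fin n → ℝ) × (Fin m → ℝ) => f q.1 q.2))
    (hc : ∀ t, ContDiff ℝ 2
      (fun q : (Fin n → ℝ) × (Fin m → ℝ) × (Fin N → ℝ) => c t q.1 q.2.1 q.2.2))
    (hcT : ContDiff ℝ 2 (fun q : (Fin n → ℝ) × (Fin N → ℝ) => cT q.1 q.2))
    -- the Hamiltonian `H(k, x, u, p, θ) = c_k(x, u, θ) + f(x, u)ᵀ p`
    (Ham : ℕ → (Fin n → ℝ) → (Fin m → ℝ) → (Fin n → ℝ) → (Fin N → ℝ) → ℝ)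
    (hHam : ∀ k xv uv pv θv,
      Ham k xv uv pv θv = c k xv uv θv + ∑ i, f xv uv i * pv i)
    (x₀ : Fin n → ℝ) (θbar : Fin N → ℝ)
    -- the parameterized trajectories and costates
    (x : ℕ → (Fin N → ℝ) → (Fin n → ℝ))
    (u : ℕ → (Fin N → ℝ) → (Fin m → ℝ))
    (p : ℕ → (Fin N → ℝ) → (Fin n → ℝ))
    -- differentiability at θ̄
    (hxdiff : ∀ k ≤ T, DifferentiableAt ℝ (x k) θbar)
    (hudiff : ∀ k < T, DifferentiableAt ℝ (u k) θbar)
    (hpdiff : ∀ k, 1 ≤ k → k ≤ T → DifferentiableAt ℝ (p k) θbar)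
    -- the Pontryagin conditions hold for all `θ` in a neighborhood of `θ̄`
    (hpontryagin : ∀ᶠ θ in nhds θbar,
      (x 0 θ = x₀) ∧
      (∀ k < T, x (k + 1) θ = f (x k θ) (u k θ)) ∧
      (∀ k, 1 ≤ k → k < T → p k θ = fun i =>
        fderiv ℝ (fun xv => c k xv (u k θ) θ) (x k θ) (Pi.single i 1) +
        ∑ i', p (k + 1) θ i' *
          fderiv ℝ (fun xv => f xv (u k θ) i') (x k θ) (Pi.single i 1)) ∧
      (∀ k < T, ∀ j : Fin m,
        fderiv ℝ (fun uv => c k (x k θ) uv θ) (u k θ) (Pi.single j 1) +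
          ∑ i', p (k + 1) θ i' *
            fderiv ℝ (fun uv => f (x k θ) uv i') (u k θ) (Pi.single j 1) = 0) ∧
      (p T θ = fun i => fderiv ℝ (fun xv => cT xv θ) (x T θ) (Pi.single i 1)))
    -- the Jacobians of `f` at `(x_k(θ̄), u_k(θ̄))`
    (A : ℕ → Matrix (Fin n) (Fin n) ℝ)
    (hA : ∀ k, A k = Matrix.of fun i j =>
      fderiv ℝ (fun xv => f xv (u k θbar) i) (x k θbar) (Pi.single j 1))
    (B : ℕ → Matrix (Fin n) (Fin m) ℝ)
    (hB : ∀ k, B k = Matrix.of fun i j =>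
      fderiv ℝ (fun uv => f (x k θbar) uv i) (u k θbar) (Pi.single j 1))
    -- the second-derivative blocks of the Hamiltonian at
    -- `(k, x_k(θ̄), u_k(θ̄), p_{k+1}(θ̄), θ̄)`
    (Hxx : ℕ → Matrix (Fin n) (Fin n) ℝ)
    (hHxx : ∀ k, Hxx k = Matrix.of fun i j =>
      fderiv ℝ (fun xv => fderiv ℝ
          (fun xv' => Ham k xv' (u k θbar) (p (k + 1) θbar) θbar) xv (Pi.single i 1))
        (x k θbar) (Pi.single j 1))
    (Hux : ℕ → Matrix (Fin m) (Fin n) ℝ)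
    (hHux : ∀ k, Hux k = Matrix.of fun j i =>
      fderiv ℝ (fun xv => fderiv ℝ
          (fun uv => Ham k xv uv (p (k + 1) θbar) θbar) (u k θbar) (Pi.single j 1))
        (x k θbar) (Pi.single i 1))
    (Huu : ℕ → Matrix (Fin m) (Fin m) ℝ)
    (hHuu : ∀ k, Huu k = Matrix.of fun j j' =>
      fderiv ℝ (fun uv => fderiv ℝ
          (fun uv' => Ham k (x k θbar) uv' (p (k + 1) θbar) θbar) uv (Pi.single j 1))
        (u k θbar) (Pi.single j' 1))
    (Hxe : ℕ → Matrix (Fin n) (Fin N) ℝ)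
    (hHxe : ∀ k, Hxe k = Matrix.of fun i a =>
      fderiv ℝ (fun θv => fderiv ℝ
          (fun xv => Ham k xv (u k θbar) (p (k + 1) θbar) θv) (x k θbar) (Pi.single i 1))
        θbar (Pi.single a 1))
    (Hue : ℕ → Matrix (Fin m) (Fin N) ℝ)
    (hHue : ∀ k, Hue k = Matrix.of fun j a =>
      fderiv ℝ (fun θv => fderiv ℝ
          (fun uv => Ham k (x k θbar) uv (p (k + 1) θbar) θv) (u k θbar) (Pi.single j 1))
        θbar (Pi.single a 1))
    -- the second-derivative blocks of the terminal cost at `(x_T(θ̄), θ̄)`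
    (HTxx : Matrix (Fin n) (Fin n) ℝ)
    (hHTxx : HTxx = Matrix.of fun i j =>
      fderiv ℝ (fun xv => fderiv ℝ (fun xv' => cT xv' θbar) xv (Pi.single i 1))
        (x T θbar) (Pi.single j 1))
    (HTxe : Matrix (Fin n) (Fin N) ℝ)
    (hHTxe : HTxe = Matrix.of fun i a =>
      fderiv ℝ (fun θv => fderiv ℝ (fun xv => cT xv θv) (x T θbar) (Pi.single i 1))
        θbar (Pi.single a 1))
    -- abbreviations 𝒜, ℛ, ℳ, 𝒬, 𝒩
    (cA : ℕ → Matrix (Fin n) (Fin n) ℝ)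
    (hcA : ∀ k, cA k = A k - B k * (Huu k)⁻¹ * Hux k)
    (cR : ℕ → Matrix (Fin n) (Fin n) ℝ)
    (hcR : ∀ k, cR k = B k * (Huu k)⁻¹ * (B k)ᵀ)
    (cM : ℕ → Matrix (Fin n) (Fin N) ℝ)
    (hcM : ∀ k, cM k = -(B k * (Huu k)⁻¹ * Hue k))
    (cQ : ℕ → Matrix (Fin n) (Fin n) ℝ)
    (hcQ : ∀ k, cQ k = Hxx k - (Hux k)ᵀ * (Huu k)⁻¹ * Hux k)
    (cN : ℕ → Matrix (Fin n) (Fin N) ℝ)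
    (hcN : ∀ k, cN k = Hxe k - (Hux k)ᵀ * (Huu k)⁻¹ * Hue k)
    -- backward Riccati recursions for 𝒫 and 𝒲
    (cP : ℕ → Matrix (Fin n) (Fin n) ℝ) (cW : ℕ → Matrix (Fin n) (Fin N) ℝ)
    (hcPT : cP T = HTxx) (hcWT : cW T = HTxe)
    (hcP : ∀ k < T, cP k =
      cQ k + (cA k)ᵀ * (1 + cP (k + 1) * cR k)⁻¹ * (cP (k + 1) * cA k))
    (hcW : ∀ k < T, cW k =
      (cA k)ᵀ * (1 + cP (k + 1) * cR k)⁻¹ * (cW (k + 1) + cP (k + 1) * cM k) + cN k)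
    -- invertibility assumptions
    (hHuuInv : ∀ k < T, IsUnit (Huu k))
    (hIPR : ∀ k < T, IsUnit (1 + cP (k + 1) * cR k))
    -- the matrices generated by the forward recursion
    (X : ℕ → Matrix (Fin n) (Fin N) ℝ) (U : ℕ → Matrix (Fin m) (Fin N) ℝ)
    (hX0 : X 0 = 0)
    (hU : ∀ k < T, U k =
      -((Huu k)⁻¹ * (Hux k * X k + Hue k + (B k)ᵀ * (1 + cP (k + 1) * cR k)⁻¹ *
        (cP (k + 1) * cA k * X k + cP (k + 1) * cM k + cW (k + 1)))))
    (hX : ∀ k < T, X (k + 1) = A k * X k + B k * U k) :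
    -- the Jacobians ∂x_k/∂θ(θ̄) and ∂u_k/∂θ(θ̄) are exactly X_k and U_k
    (∀ k ≤ T, X k = Matrix.of fun i a =>
      fderiv ℝ (fun θv => x k θv i) θbar (Pi.single a 1)) ∧
    (∀ k < T, U k = Matrix.of fun j a =>
      fderiv ℝ (fun θv => u k θv j) θbar (Pi.single a 1)) :=
  pdp_trajectory_derivatives_general f c cT hf hc hcT Ham hHam x₀ θbar x u p hxdiff hudiff hpdiff
    hpontryagin A hA B hB Hxx hHxx Hux hHux Huu hHuu Hxe hHxe Hue hHue HTxx hHTxx HTxe hHTxe cA hcA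
    cR hcR cM hcM cQ hcQ cN hcN cP cW hcPT hcWT hcP hcW hHuuInv hIPR X U hX0 hU hX
end

section
/- Riccati contraction inequality for the EKF with constant parameter dynamics: let P, Q ∈ ℝ^{N×N} and R ∈ ℝ^{q×q} be symmetric matrices, G ∈ ℝ^{q×N}, and suppose there exist positive reals p̄, ḡ, r̲, q̲ such that 0 ≺ P ⪯ p̄·I, ‖G‖ ≤ ḡ (operator 2-norm), R ⪰ r̲·I, and Q ⪰ q̲·I. Let K = P Gᵀ (G P Gᵀ + R)^{-1} and define the next predicted covariance P⁺ = (I − K G) P + Q. Then P⁺ is symmetric positive definite, and there exists a real λ ∈ (0, 1), depending only on p̄, ḡ, r̲, q̲, such that (I − K G)ᵀ (P⁺)^{-1} (I − K G) ⪯ (1 − λ) P^{-1}. -/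
/-!
With the information matrix `M = P⁻¹ + Gᵀ R⁻¹ G`, the Woodbury identity gives `(I - K G) P = M⁻¹`,
so `P⁺ = M⁻¹ + Q` and `(I - K G)ᵀ (P⁺)⁻¹ (I - K G) = P⁻¹ (M + M Q M)⁻¹ P⁻¹`. From
`M ⪰ P⁻¹ ⪰ p̄⁻¹ I` we get `M Q M ⪰ q̲ M² ⪰ (q̲ / p̄) M`, hence `M + M Q M ⪰ (1 + q̲ / p̄) P⁻¹`, and
since inversion is antitone in the Loewner order the claim holds with `λ = q̲ / (p̄ + q̲)`.
-/

open Matrix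
open scoped Matrix.Norms.L2Operator
open scoped ComplexOrder MatrixOrder

namespace Matrix

section Loewner

variable {𝕜 n : Type*} [RCLike 𝕜] {A B : Matrix n n 𝕜}

lemma PosDef.of_le (hA : A.PosDef) (hAB : A ≤ B) : B.PosDef := by
  simpa using hA.add_posSemidef hAB

variable [DecidableEq n]

lemma posDef_of_smul_one_le {c : ℝ} (hc : 0 < c) (h : c • 1 ≤ A) : A.PosDef :=
  (PosDef.one.smul hc).of_le h

variable [Fintype n]

-- Both Schur complements of the block matrix `[[B, 1], [1, A⁻¹]]` express its positivity.
lemma PosDef.inv_le_inv (hA : A.PosDef) (hAB : A ≤ B) : B⁻¹ ≤ A⁻¹ := by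
  have hB := hA.of_le hAB
  have := hB.isUnit.invertible
  have := hA.inv.isUnit.invertible
  have hblock : (fromBlocks B 1 1ᴴ A⁻¹).PosSemidef := by
    rw [PosDef.fromBlocks₂₂ _ _ hA.inv]
    simpa [nonsing_inv_nonsing_inv _ hA.det_pos.ne'.isUnit] using le_iff.1 hAB
  rw [PosDef.fromBlocks₁₁ _ _ hB] at hblock
  simpa [le_iff] using hblock

lemma inv_real_smul {c : ℝ} (hc : c ≠ 0) (hA : IsUnit A) : (c • A)⁻¹ = c⁻¹ • A⁻¹ :=
  inv_eq_left_inv <| by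
    rw [smul_mul_smul_comm, inv_mul_cancel₀ hc, nonsing_inv_mul _ ((isUnit_iff_isUnit_det A).1 hA),
      one_smul]

lemma smul_le_mul_self {c : ℝ} (hc : 0 ≤ c) (h : c • 1 ≤ A) : c • A ≤ A * A := by
  have hsq : A * A - c • A = (A - c • 1)ᴴ * (A - c • 1) + c • (A - c • 1) := by
    rw [(le_iff.1 h).isHermitian.eq]
    simp only [mul_sub, sub_mul, mul_smul_comm, smul_mul_assoc, mul_one, one_mul, smul_sub,
      smul_smul]
    abel
  rw [le_iff, hsq]
  exact (posSemidef_conjTranspose_mul_self _).add ((le_iff.1 h).smul hc)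

end Loewner

section Kalman

variable {α n m : Type*} [CommRing α] [Fintype n] [DecidableEq n] [Fintype m] [DecidableEq m]

noncomputable def kalmanGain (P : Matrix n n α) (G : Matrix m n α) (R : Matrix m m α) :
    Matrix n m α :=
  P * Gᵀ * (G * P * Gᵀ + R)⁻¹

theorem one_sub_kalmanGain_mul_mul_eq_inv {P : Matrix n n α} {G : Matrix m n α} {R : Matrix m m α}
    (hP : IsUnit P) (hR : IsUnit R) (hS : IsUnit (G * P * Gᵀ + R)) :
    (1 - kalmanGain P G R * G) * P = (P⁻¹ + Gᵀ * R⁻¹ * G)⁻¹ := by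
  have hPdet := (isUnit_iff_isUnit_det P).1 hP
  have hRdet := (isUnit_iff_isUnit_det R).1 hR
  rw [add_mul_mul_inv_eq_sub _ _ _ _ (isUnit_nonsing_inv_iff.2 hP) (isUnit_nonsing_inv_iff.2 hR)
    (by rwa [nonsing_inv_nonsing_inv _ hRdet, nonsing_inv_nonsing_inv _ hPdet, add_comm]),
    nonsing_inv_nonsing_inv _ hRdet, nonsing_inv_nonsing_inv _ hPdet, kalmanGain, add_comm R]
  noncomm_ring

lemma inv_add_mul_mul_self {M : Matrix n n α} (hM : IsUnit M) (Q : Matrix n n α) :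
    (M + M * Q * M)⁻¹ = M⁻¹ * (M⁻¹ + Q)⁻¹ * M⁻¹ := by
  have hMM : M * (M⁻¹ + Q) * M = M + M * Q * M := by
    rw [mul_add, mul_nonsing_inv _ ((isUnit_iff_isUnit_det M).1 hM), add_mul, one_mul]
  rw [← hMM, mul_inv_rev, mul_inv_rev, mul_assoc]

end Kalman

section Contraction

variable {𝕜 n : Type*} [RCLike 𝕜] [Fintype n] [DecidableEq n] {P M Q : Matrix n n 𝕜} {p q : ℝ}

lemma smul_inv_le_add_mul_mul (hp : 0 < p) (hq : 0 ≤ q) (hP : P.PosDef) (hPp : P ≤ p • 1)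
    (hPM : P⁻¹ ≤ M) (hQ : q • 1 ≤ Q) : ((p + q) / p) • P⁻¹ ≤ M + M * Q * M := by
  have hM : M.PosDef := hP.inv.of_le hPM
  have hpM : p⁻¹ • 1 ≤ M := by
    calc p⁻¹ • (1 : Matrix n n 𝕜) = (p • 1)⁻¹ := by rw [inv_real_smul hp.ne' isUnit_one, inv_one]
      _ ≤ P⁻¹ := hP.inv_le_inv hPp
      _ ≤ M := hPM
  calc ((p + q) / p) • P⁻¹ = P⁻¹ + q • (p⁻¹ • P⁻¹) := by
        rw [smul_smul, add_div, div_self hp.ne', add_smul, one_smul, div_eq_mul_inv]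
    _ ≤ M + q • (p⁻¹ • M) := by gcongr
    _ ≤ M + q • (M * M) := by gcongr; exact smul_le_mul_self (inv_nonneg.2 hp.le) hpM
    _ = M + M * (q • 1) * M := by rw [mul_smul_comm, mul_one, smul_mul_assoc]
    _ ≤ M + M * Q * M := by gcongr; exact hM.isHermitian.isSelfAdjoint.conjugate_le_conjugate hQ

theorem conjTranspose_mul_inv_add_mul_le (hp : 0 < p) (hq : 0 ≤ q) (hP : P.PosDef)
    (hPp : P ≤ p • 1) (hPM : P⁻¹ ≤ M) (hQ : q • 1 ≤ Q) :
    (M⁻¹ * P⁻¹)ᴴ * (M⁻¹ + Q)⁻¹ * (M⁻¹ * P⁻¹) ≤ (p / (p + q)) • P⁻¹ := by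
  have hM : M.PosDef := hP.inv.of_le hPM
  have hPinv : IsSelfAdjoint P⁻¹ := hP.inv.isHermitian.isSelfAdjoint
  have hlower := smul_inv_le_add_mul_mul hp hq hP hPp hPM hQ
  have hupper : (M + M * Q * M)⁻¹ ≤ (p / (p + q)) • P := by
    simpa [inv_real_smul (by positivity : (p + q) / p ≠ 0) hP.inv.isUnit,
      nonsing_inv_nonsing_inv _ hP.det_pos.ne'.isUnit]
      using (hP.inv.smul (by positivity)).inv_le_inv hlower
  calc (M⁻¹ * P⁻¹)ᴴ * (M⁻¹ + Q)⁻¹ * (M⁻¹ * P⁻¹) = P⁻¹ * (M + M * Q * M)⁻¹ * P⁻¹ := by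
        rw [conjTranspose_mul, hP.inv.isHermitian.eq, hM.inv.isHermitian.eq,
          inv_add_mul_mul_self hM.isUnit]
        simp only [mul_assoc]
    _ ≤ P⁻¹ * ((p / (p + q)) • P) * P⁻¹ := hPinv.conjugate_le_conjugate hupper
    _ = (p / (p + q)) • P⁻¹ := by
        rw [mul_smul_comm, smul_mul_assoc, nonsing_inv_mul _ hP.det_pos.ne'.isUnit, one_mul]

end Contraction

end Matrix

theorem ekf_riccati_contraction_general
    {N q : ℕ}
    (pbar gbar rlow qlow : ℝ)
    (hpbar : 0 < pbar) (hrlow : 0 < rlow) (hqlow : 0 < qlow) :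
    ∃ lam : ℝ, 0 < lam ∧ lam < 1 ∧
      ∀ (P Q : Matrix (Fin N) (Fin N) ℝ) (R : Matrix (Fin q) (Fin q) ℝ)
        (G : Matrix (Fin q) (Fin N) ℝ),
        P.IsSymm → Q.IsSymm → R.IsSymm →
        P.PosDef →
        (pbar • (1 : Matrix (Fin N) (Fin N) ℝ) - P).PosSemidef →
        ‖G‖ ≤ gbar →
        (R - rlow • (1 : Matrix (Fin q) (Fin q) ℝ)).PosSemidef →
        (Q - qlow • (1 : Matrix (Fin N) (Fin N) ℝ)).PosSemidef →
        ∀ (K : Matrix (Fin N) (Fin q) ℝ) (Pplus : Matrix (Fin N) (Fin N) ℝ),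
          K = P * Gᵀ * (G * P * Gᵀ + R)⁻¹ →
          Pplus = (1 - K * G) * P + Q →
          Pplus.PosDef ∧
            ((1 - lam) • P⁻¹ - (1 - K * G)ᵀ * Pplus⁻¹ * (1 - K * G)).PosSemidef := by
  refine ⟨qlow / (pbar + qlow), by positivity,
    (div_lt_one (by positivity)).2 (lt_add_of_pos_left _ hpbar), ?_⟩
  intro P Q R G _ _ _ hP hPp _ hRlow hQlow K Pplus hK hPplus
  have hR : R.PosDef := posDef_of_smul_one_le hrlow hRlow
  set M := P⁻¹ + Gᵀ * R⁻¹ * G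
  have hPM : P⁻¹ ≤ M := by
    refine le_add_of_nonneg_right (PosSemidef.nonneg ?_)
    simpa using hR.inv.posSemidef.conjTranspose_mul_mul_same G
  have hM : M.PosDef := hP.inv.of_le hPM
  have hS : (G * P * Gᵀ + R).PosDef := by
    refine PosDef.posSemidef_add ?_ hR
    simpa using hP.posSemidef.mul_mul_conjTranspose_same G
  have hupdate : (1 - K * G) * P = M⁻¹ :=
    hK ▸ one_sub_kalmanGain_mul_mul_eq_inv hP.isUnit hR.isUnit hS.isUnit
  have hgain : 1 - K * G = M⁻¹ * P⁻¹ := by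
    rw [← hupdate, mul_nonsing_inv_cancel_right _ _ hP.det_pos.ne'.isUnit]
  have hPplus' : Pplus = M⁻¹ + Q := by rw [hPplus, hupdate]
  have hQnonneg : 0 ≤ Q := (PosSemidef.one.smul hqlow.le).nonneg.trans hQlow
  refine ⟨hPplus' ▸ hM.inv.add_posSemidef hQnonneg.posSemidef, ?_⟩
  have hlam : 1 - qlow / (pbar + qlow) = pbar / (pbar + qlow) := by field_simp; ring
  rw [hlam, ← le_iff, ← conjTranspose_eq_transpose_of_trivial, hgain, hPplus']
  exact conjTranspose_mul_inv_add_mul_le hpbar hqlow.le hP hPp hPM hQlow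

/-- **Riccati contraction inequality for the EKF with constant parameter dynamics.**
Let `P, Q ∈ ℝ^{N×N}` and `R ∈ ℝ^{q×q}` be symmetric matrices, `G ∈ ℝ^{q×N}`, and suppose
there exist positive reals `p̄, ḡ, r̲, q̲` with `0 ≺ P ⪯ p̄·I`, `‖G‖ ≤ ḡ`, `R ⪰ r̲·I` and
`Q ⪰ q̲·I`.  Let `K = P Gᵀ (G P Gᵀ + R)⁻¹` and `P⁺ = (I − K G) P + Q`.  Then `P⁺` is
symmetric positive definite and there exists `λ ∈ (0,1)`, depending only on
`p̄, ḡ, r̲, q̲`, such that `(I − K G)ᵀ (P⁺)⁻¹ (I − K G) ⪯ (1 − λ) P⁻¹`. -/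
theorem ekf_riccati_contraction
    {N q : ℕ}
    (pbar gbar rlow qlow : ℝ)
    (hpbar : 0 < pbar) (hgbar : 0 < gbar) (hrlow : 0 < rlow) (hqlow : 0 < qlow) :
    ∃ lam : ℝ, 0 < lam ∧ lam < 1 ∧
      ∀ (P Q : Matrix (Fin N) (Fin N) ℝ) (R : Matrix (Fin q) (Fin q) ℝ)
        (G : Matrix (Fin q) (Fin N) ℝ),
        P.IsSymm → Q.IsSymm → R.IsSymm →
        P.PosDef →
        (pbar • (1 : Matrix (Fin N) (Fin N) ℝ) - P).PosSemidef →
        ‖G‖ ≤ gbar →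
        (R - rlow • (1 : Matrix (Fin q) (Fin q) ℝ)).PosSemidef →
        (Q - qlow • (1 : Matrix (Fin N) (Fin N) ℝ)).PosSemidef →
        ∀ (K : Matrix (Fin N) (Fin q) ℝ) (Pplus : Matrix (Fin N) (Fin N) ℝ),
          K = P * Gᵀ * (G * P * Gᵀ + R)⁻¹ →
          Pplus = (1 - K * G) * P + Q →
          Pplus.PosDef ∧
            ((1 - lam) • P⁻¹ - (1 - K * G)ᵀ * Pplus⁻¹ * (1 - K * G)).PosSemidef :=
  ekf_riccati_contraction_general pbar gbar rlow qlow hpbar hrlow hqlow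
end
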